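/- Quantitative Kato-type convergence: let {e_m}_{m∈ℕ} and e_∞ be energy forms in the same Hilbert space H with common form domain dom e_m = dom e_∞ for all m, and let Δ_m, Δ_∞ be the associated non-negative self-adjoint operators. If |e_∞(f,f) − e_m(f,f)| ≤ δ̂_m ‖f‖_{e_∞}² for all f in the common domain, with 0 ≤ δ̂_m < 1, then ‖(Δ_m+1)⁻¹ − (Δ_∞+1)⁻¹‖ ≤ 4 δ̂_m / √(1−δ̂_m); in particular, if δ̂_m → 0 then Δ_m converges to Δ_∞ in norm resolvent sense. -/

import Mathlib

open scoped ComplexConjugate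

noncomputable section

/-- A non-negative self-adjoint operator in a complex Hilbert space `H`, packaged as a
densely defined symmetric non-negative operator together with its (everywhere defined,
bounded) resolvent `res = (Δ + 1)⁻¹`. -/
structure NonnegOp (H : Type*) [NormedAddCommGroup H] [InnerProductSpace ℂ H]
    [CompleteSpace H] where
  domain : Submodule ℂ H
  dense : Dense (domain : Set H)
  op : domain →ₗ[ℂ] H
  symm : ∀ f g : domain, (inner ℂ (op f) (g : H) : ℂ) = inner ℂ (f : H) (op g)
  nonneg : ∀ f : domain, 0 ≤ (inner ℂ (op f) (f : H) : ℂ).re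
  res : H →L[ℂ] H
  res_mem : ∀ u : H, res u ∈ domain
  op_res : ∀ u : H, op ⟨res u, res_mem u⟩ + res u = u
  res_op : ∀ f : domain, res (op f + (f : H)) = f

/-- `Rz` is the resolvent `(Δ - z)⁻¹` of the operator `T` at the point `z`. -/
structure IsResolventAt {H : Type*} [NormedAddCommGroup H] [InnerProductSpace ℂ H]
    [CompleteSpace H] (T : NonnegOp H) (z : ℂ) (Rz : H →L[ℂ] H) : Prop where
  mem : ∀ u : H, Rz u ∈ T.domain
  right_inv : ∀ u : H, T.op ⟨Rz u, mem u⟩ - z • Rz u = u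
  left_inv : ∀ f : T.domain, Rz (T.op f - z • (f : H)) = f

/-- The spectrum of `T`: the set of `z : ℂ` at which no bounded resolvent exists. -/
def NonnegOp.spec {H : Type*} [NormedAddCommGroup H] [InnerProductSpace ℂ H]
    [CompleteSpace H] (T : NonnegOp H) : Set ℂ :=
  {z | ¬ ∃ Rz : H →L[ℂ] H, IsResolventAt T z Rz}


/-- An energy form in `H` with form domain `D`: a densely defined, closed, non-negative,
hermitian sesquilinear form (conjugate-linear in the first argument). -/
structure EnergyFormOn (H : Type*) [NormedAddCommGroup H] [InnerProductSpace ℂ H]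
    [CompleteSpace H] (D : Submodule ℂ H) where
  dense : Dense (D : Set H)
  form : D → D → ℂ
  linear_right : ∀ f : D, IsLinearMap ℂ (form f)
  conj_symm : ∀ f g : D, form g f = conj (form f g)
  nonneg : ∀ f : D, 0 ≤ (form f f).re
  closed : ∀ f : ℕ → D,
    (∀ ε : ℝ, 0 < ε → ∃ N : ℕ, ∀ p ≥ N, ∀ q ≥ N,
        ‖((f p : H)) - (f q : H)‖ ^ 2 + (form (f p - f q) (f p - f q)).re < ε) →
    ∃ g : D, Filter.Tendsto
        (fun n => ‖((f n : H)) - (g : H)‖ ^ 2 + (form (f n - g) (f n - g)).re)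
        Filter.atTop (nhds 0)

/-- The form norm `‖f‖_e = (‖f‖² + e(f,f))^{1/2}`. -/
def EnergyFormOn.enorm {H : Type*} [NormedAddCommGroup H] [InnerProductSpace ℂ H]
    [CompleteSpace H] {D : Submodule ℂ H} (E : EnergyFormOn H D) (f : D) : ℝ :=
  Real.sqrt (‖(f : H)‖ ^ 2 + (E.form f f).re)

/-- `T` is the non-negative self-adjoint operator associated with the energy form `E`
(first representation theorem). -/
structure IsAssociatedOp {H : Type*} [NormedAddCommGroup H] [InnerProductSpace ℂ H]
    [CompleteSpace H] {D : Submodule ℂ H} (E : EnergyFormOn H D) (T : NonnegOp H) : Prop where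
  le : T.domain ≤ D
  compat : ∀ (f : T.domain) (u : D),
    E.form ⟨(f : H), le f.2⟩ u = (inner ℂ (T.op f) (u : H) : ℂ)

/-!
Write `R = (Δ + 1)⁻¹`, `d = e_∞ - e_m` and `δ = δ̂_m`. Testing the defining relations
`e(R u, g) + ⟪R u, g⟫ = ⟪u, g⟫` of both resolvents against each other gives
`⟪v, R_m u - R_∞ u⟫ = d(R_∞ v, R_m u)`. The form `d` is hermitian with
`|d(f, f)| ≤ δ ‖f‖²_{e_∞}`; polarization and a discriminant argument upgrade this to
`|d(f, g)| ≤ δ ‖f‖_{e_∞} ‖g‖_{e_∞}`. Since `‖R_∞ v‖_{e_∞} ≤ ‖v‖` and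
`‖R_m u‖_{e_∞} ≤ ‖R_m u‖_{e_m} / √(1 - δ) ≤ ‖u‖ / √(1 - δ)`, choosing `v = (R_m - R_∞) u` gives
`‖R_m - R_∞‖ ≤ δ / √(1 - δ)`.
-/

open scoped InnerProductSpace

namespace LinearMap

variable {V : Type*} [AddCommGroup V] [Module ℂ V] {b p : V →ₗ⋆[ℂ] V →ₗ[ℂ] ℂ} {δ : ℝ}

theorem IsSymm.re_apply_le (hb : b.IsSymm) (h : ∀ x, ‖b x x‖ ≤ δ * (p x x).re) (x y : V) :
    (b x y).re ≤ δ / 2 * ((p x x).re + (p y y).re) := by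
  have hadd := (Complex.re_le_norm _).trans (h (x + y))
  have hsub := neg_le_of_abs_le ((Complex.abs_re_le_norm _).trans (h (x - y)))
  have hsymm := congrArg Complex.re (hb.eq x y)
  simp only [map_add, map_sub, add_apply, sub_apply, Complex.add_re, Complex.sub_re,
    Complex.conj_re] at hadd hsub hsymm
  linarith

theorem IsSymm.re_apply_sq_le (hb : b.IsSymm) (h : ∀ x, ‖b x x‖ ≤ δ * (p x x).re) (x y : V) :
    (b x y).re ^ 2 ≤ δ ^ 2 * (p x x).re * (p y y).re := by
  have hquad : ∀ t : ℝ,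
      0 ≤ δ / 2 * (p y y).re * (t * t) + -(b x y).re * t + δ / 2 * (p x x).re := by
    intro t
    have := hb.re_apply_le h x ((t : ℂ) • y)
    simp only [map_smul, map_smulₛₗ₂, smul_eq_mul, Complex.conj_ofReal,
      Complex.re_ofReal_mul] at this
    linarith
  have := discrim_le_zero hquad
  rw [discrim] at this
  linarith

theorem IsSymm.norm_apply_sq_le (hb : b.IsSymm) (h : ∀ x, ‖b x x‖ ≤ δ * (p x x).re) (x y : V) :
    ‖b x y‖ ^ 2 ≤ δ ^ 2 * (p x x).re * (p y y).re := by
  set c := Complex.exp (↑(-(b x y).arg) * Complex.I)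
  have hrot : b x (c • y) = ‖b x y‖ := by
    rw [map_smul, smul_eq_mul]
    conv_lhs => rw [← Complex.norm_mul_exp_arg_mul_I (b x y)]
    rw [mul_left_comm, ← Complex.exp_add]
    push_cast
    simp
  have hp : p (c • y) (c • y) = p y y := by
    simp only [map_smul, map_smulₛₗ₂, smul_eq_mul, ← mul_assoc, Complex.mul_conj',
      Complex.norm_exp_ofReal_mul_I, c]
    simp
  simpa only [hrot, hp, Complex.ofReal_re] using hb.re_apply_sq_le h x (c • y)

end LinearMap

namespace EnergyFormOn

variable {H : Type*} [NormedAddCommGroup H] [InnerProductSpace ℂ H] [CompleteSpace H]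
  {D : Submodule ℂ H}

def sesq (E : EnergyFormOn H D) : D →ₗ⋆[ℂ] D →ₗ[ℂ] ℂ :=
  LinearMap.mk₂'ₛₗ (starRingEnd ℂ) (RingHom.id ℂ) E.form
    (fun f g h => by rw [E.conj_symm, (E.linear_right h).map_add, map_add, ← E.conj_symm,
      ← E.conj_symm])
    (fun c f h => by rw [E.conj_symm, (E.linear_right h).map_smul, smul_eq_mul, map_mul,
      ← E.conj_symm, smul_eq_mul])
    (fun f => (E.linear_right f).map_add)
    (fun c f => (E.linear_right f).map_smul c)

@[simp]
theorem sesq_apply (E : EnergyFormOn H D) (f g : D) : E.sesq f g = E.form f g := rfl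

theorem isSymm_sesq_sub (E E' : EnergyFormOn H D) : (E.sesq - E'.sesq).IsSymm :=
  ⟨fun f g => by simp [E.conj_symm f g, E'.conj_symm f g]⟩

theorem enorm_sq (E : EnergyFormOn H D) (f : D) :
    E.enorm f ^ 2 = ‖(f : H)‖ ^ 2 + (E.form f f).re :=
  Real.sq_sqrt (add_nonneg (sq_nonneg _) (E.nonneg f))

theorem enorm_sq_eq_re (E : EnergyFormOn H D) (f : D) :
    E.enorm f ^ 2 = ((E.sesq + (innerₛₗ ℂ).domRestrict₁₂ D D) f f).re := by
  rw [enorm_sq, ← inner_self_eq_norm_sq (𝕜 := ℂ), add_comm]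
  rfl

theorem enorm_nonneg (E : EnergyFormOn H D) (f : D) : 0 ≤ E.enorm f := Real.sqrt_nonneg _

theorem norm_le_enorm (E : EnergyFormOn H D) (f : D) : ‖(f : H)‖ ≤ E.enorm f :=
  Real.le_sqrt_of_sq_le (le_add_of_nonneg_right (E.nonneg f))

theorem norm_form_sub_le {E E' : EnergyFormOn H D} {δ : ℝ} (hδ : 0 ≤ δ)
    (h : ∀ f, ‖E.form f f - E'.form f f‖ ≤ δ * E.enorm f ^ 2) (f g : D) :
    ‖E.form f g - E'.form f g‖ ≤ δ * E.enorm f * E.enorm g := by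
  have hsq := (isSymm_sesq_sub E E').norm_apply_sq_le (δ := δ)
    (p := E.sesq + (innerₛₗ ℂ).domRestrict₁₂ D D) (fun f => enorm_sq_eq_re E f ▸ h f) f g
  simp only [← enorm_sq_eq_re, LinearMap.sub_apply, sesq_apply] at hsq
  refine (pow_le_pow_iff_left₀ (norm_nonneg _) ?_ two_ne_zero).mp (by linarith)
  exact mul_nonneg (mul_nonneg hδ (E.enorm_nonneg f)) (E.enorm_nonneg g)

theorem enorm_sq_le_of_form_close {E E' : EnergyFormOn H D} {δ : ℝ}
    (h : ∀ f, ‖E.form f f - E'.form f f‖ ≤ δ * E.enorm f ^ 2) (f : D) :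
    (1 - δ) * E.enorm f ^ 2 ≤ E'.enorm f ^ 2 := by
  have hre := (Complex.re_le_norm _).trans (h f)
  rw [Complex.sub_re] at hre
  rw [enorm_sq, enorm_sq] at *
  linarith

end EnergyFormOn

namespace IsAssociatedOp

variable {H : Type*} [NormedAddCommGroup H] [InnerProductSpace ℂ H] [CompleteSpace H]
  {D : Submodule ℂ H} {E E' : EnergyFormOn H D} {S S' : NonnegOp H}

def resolvent (hS : IsAssociatedOp E S) (u : H) : D := ⟨S.res u, hS.le (S.res_mem u)⟩

@[simp]
theorem coe_resolvent (hS : IsAssociatedOp E S) (u : H) : (hS.resolvent u : H) = S.res u := rfl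

theorem form_resolvent_add_inner (hS : IsAssociatedOp E S) (u : H) (g : D) :
    E.form (hS.resolvent u) g + ⟪S.res u, (g : H)⟫_ℂ = ⟪u, (g : H)⟫_ℂ := by
  rw [resolvent, hS.compat ⟨S.res u, S.res_mem u⟩ g, ← inner_add_left, S.op_res u]

theorem enorm_resolvent_le (hS : IsAssociatedOp E S) (u : H) :
    E.enorm (hS.resolvent u) ≤ ‖u‖ := by
  set e := E.enorm (hS.resolvent u)
  have hsq : e ^ 2 ≤ ‖u‖ * e :=
    calc e ^ 2 = (E.form (hS.resolvent u) (hS.resolvent u) + ⟪S.res u, S.res u⟫_ℂ).re := by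
          rw [EnergyFormOn.enorm_sq, Complex.add_re, add_comm, coe_resolvent,
            ← inner_self_eq_norm_sq (𝕜 := ℂ)]
          rfl
      _ = (⟪u, S.res u⟫_ℂ).re := congrArg Complex.re (hS.form_resolvent_add_inner u _)
      _ ≤ ‖u‖ * ‖S.res u‖ := re_inner_le_norm (𝕜 := ℂ) u _
      _ ≤ ‖u‖ * e := mul_le_mul_of_nonneg_left (E.norm_le_enorm (hS.resolvent u)) (norm_nonneg u)
  nlinarith [E.enorm_nonneg (hS.resolvent u), norm_nonneg u]

theorem inner_res_left (hS : IsAssociatedOp E S) (u v : H) :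
    ⟪S.res v, u⟫_ℂ = ⟪v, S.res u⟫_ℂ := by
  have hu := congrArg conj (hS.form_resolvent_add_inner u (hS.resolvent v))
  rw [map_add, inner_conj_symm, inner_conj_symm, ← E.conj_symm] at hu
  exact hu.symm.trans (hS.form_resolvent_add_inner v (hS.resolvent u))

theorem inner_res_sub_res (hS : IsAssociatedOp E S) (hS' : IsAssociatedOp E' S') (u v : H) :
    ⟪v, S'.res u - S.res u⟫_ℂ
      = E.form (hS.resolvent v) (hS'.resolvent u)
        - E'.form (hS.resolvent v) (hS'.resolvent u) := by
  have hv : E.form (hS.resolvent v) (hS'.resolvent u) + ⟪S.res v, S'.res u⟫_ℂ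
      = ⟪v, S'.res u⟫_ℂ := hS.form_resolvent_add_inner v (hS'.resolvent u)
  have hu : E'.form (hS.resolvent v) (hS'.resolvent u) + ⟪S.res v, S'.res u⟫_ℂ
      = ⟪v, S.res u⟫_ℂ := by
    have := congrArg conj (hS'.form_resolvent_add_inner u (hS.resolvent v))
    rw [map_add, inner_conj_symm, inner_conj_symm, ← E'.conj_symm] at this
    exact this.trans (hS.inner_res_left u v)
  rw [inner_sub_right]
  linear_combination hu - hv

theorem norm_res_sub_res_le (hS : IsAssociatedOp E S) (hS' : IsAssociatedOp E' S') {δ : ℝ}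
    (hδ0 : 0 ≤ δ) (hδ1 : δ < 1) (h : ∀ f, ‖E.form f f - E'.form f f‖ ≤ δ * E.enorm f ^ 2) :
    ‖S'.res - S.res‖ ≤ δ / Real.sqrt (1 - δ) := by
  have hsqrt : 0 < Real.sqrt (1 - δ) := Real.sqrt_pos.2 (by linarith)
  have henorm_res' (u : H) : E.enorm (hS'.resolvent u) ≤ ‖u‖ / Real.sqrt (1 - δ) := by
    rw [le_div_iff₀ hsqrt]
    refine (pow_le_pow_iff_left₀ (mul_nonneg (E.enorm_nonneg _) hsqrt.le) (norm_nonneg u)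
      two_ne_zero).mp ?_
    rw [mul_pow, Real.sq_sqrt (by linarith), mul_comm]
    exact (EnergyFormOn.enorm_sq_le_of_form_close h _).trans
      (pow_le_pow_left₀ (Real.sqrt_nonneg _) (hS'.enorm_resolvent_le u) 2)
  refine ContinuousLinearMap.opNorm_le_bound _ (by positivity) fun u => ?_
  set w := (S'.res - S.res) u
  have hw : ‖w‖ ^ 2 ≤ δ / Real.sqrt (1 - δ) * ‖u‖ * ‖w‖ :=
    calc ‖w‖ ^ 2 = (⟪w, S'.res u - S.res u⟫_ℂ).re := (inner_self_eq_norm_sq (𝕜 := ℂ) w).symm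
      _ ≤ ‖⟪w, S'.res u - S.res u⟫_ℂ‖ := Complex.re_le_norm _
      _ ≤ δ * E.enorm (hS.resolvent w) * E.enorm (hS'.resolvent u) := by
          rw [hS.inner_res_sub_res hS']
          exact EnergyFormOn.norm_form_sub_le hδ0 h _ _
      _ ≤ δ * ‖w‖ * (‖u‖ / Real.sqrt (1 - δ)) := by
          gcongr
          · exact E.enorm_nonneg _
          · exact hS.enorm_resolvent_le w
          · exact henorm_res' u
      _ = δ / Real.sqrt (1 - δ) * ‖u‖ * ‖w‖ := by ring
  nlinarith [norm_nonneg w, show 0 ≤ δ / Real.sqrt (1 - δ) * ‖u‖ by positivity]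

end IsAssociatedOp

/-- Quantitative Kato-type convergence.  Let `{e_m}` and `e_∞` be
energy forms in the same Hilbert space `H` with common form domain `D`, and let
`Δ_m = T m`, `Δ_∞ = Tinf` be the associated non-negative self-adjoint operators.
If `|e_∞(f,f) − e_m(f,f)| ≤ δ̂_m ‖f‖_{e_∞}²` on the common domain with `0 ≤ δ̂_m < 1`,
then `‖(Δ_m+1)⁻¹ − (Δ_∞+1)⁻¹‖ ≤ 4 δ̂_m / √(1−δ̂_m)`; in particular, if `δ̂_m → 0`
then `Δ_m → Δ_∞` in norm resolvent sense. -/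
theorem kato_norm_resolvent_convergence
    {H : Type*} [NormedAddCommGroup H] [InnerProductSpace ℂ H] [CompleteSpace H]
    {D : Submodule ℂ H}
    (Em : ℕ → EnergyFormOn H D) (Einf : EnergyFormOn H D)
    (T : ℕ → NonnegOp H) (Tinf : NonnegOp H)
    (hT : ∀ m, IsAssociatedOp (Em m) (T m)) (hTinf : IsAssociatedOp Einf Tinf)
    (δh : ℕ → ℝ) (hδ0 : ∀ m, 0 ≤ δh m) (hδ1 : ∀ m, δh m < 1)
    (h : ∀ m, ∀ f : D,
      ‖Einf.form f f - (Em m).form f f‖ ≤ δh m * Einf.enorm f ^ 2) :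
    (∀ m, ‖(T m).res - Tinf.res‖ ≤ 4 * δh m / Real.sqrt (1 - δh m)) ∧
      (Filter.Tendsto δh Filter.atTop (nhds 0) →
        Filter.Tendsto (fun m => ‖(T m).res - Tinf.res‖) Filter.atTop (nhds 0)) := by
  have hbound (m : ℕ) : ‖(T m).res - Tinf.res‖ ≤ 4 * δh m / Real.sqrt (1 - δh m) :=
    (hTinf.norm_res_sub_res_le (hT m) (hδ0 m) (hδ1 m) (h m)).trans
      (by gcongr; linarith [hδ0 m])
  refine ⟨hbound, fun hlim => squeeze_zero (fun _ => norm_nonneg _) hbound ?_⟩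
  have hlim' := (hlim.const_mul 4).div ((tendsto_const_nhds (x := 1)).sub hlim).sqrt (by simp)
  rwa [mul_zero, zero_div] at hlim'
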